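/- arXiv:1405.2414 — 3 statements merged into one kernel-verified Lean document; each statement's English description precedes it below -/
import Mathlib

section
/- Let m, n be nonnegative integers, w = v^d for a fixed integer d, and let {e_p}_{p>=0} be a sequence in Z[v^{±1}] satisfying e_p = \sum_{k=1}^{p} (-1)^{k-1} e_{p-k} [m+k-1 choose k]_w for all p > n. Then e_p = 0 for all p > n+m, and the polynomial \sum_{k=0}^{m} [m choose k]_w t^k divides \sum_{p=0}^{m+n} e_p t^p in Z[v^{±1}][t]. -/
open Finset

noncomputable section

/-- Field of rational functions over ℚ, containing `ℤ[w^{±1}]`. -/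
abbrev KK : Type := RatFunc ℚ

/-- The indeterminate `w`. -/
def wvar : KK := RatFunc.X

/-- The bar-invariant quantum integer `[n]_u = (u^n - u^{-n})/(u - u⁻¹)`. -/
def qint (u : KK) (n : ℤ) : KK := (u ^ n - u ^ (-n)) / (u - u⁻¹)

/-- The bar-invariant quantum binomial coefficient. -/
def qbinom (u : KK) (n : ℤ) (k : ℕ) : KK :=
  (∏ i ∈ Finset.range k, qint u (n - i)) / (∏ i ∈ Finset.range k, qint u ((i : ℤ) + 1))

/-! Put `A_m(t) = ∑ₖ (-1)ᵏ [m+k-1 choose k]_w tᵏ`, `B_m(t) = ∑ₖ [m choose k]_w tᵏ` and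
`E(t) = ∑ₚ eₚ tᵖ`. The q-Pascal rule gives `B_{m+1}(t) = (1 + wᵐ t) B_m(w⁻¹ t)` and
`(1 + wᵐ t) A_{m+1}(t) = A_m(w⁻¹ t)`, so `A_m B_m = 1` by induction on `m`. The recurrence says
precisely that `A_m E` has no coefficient beyond `tⁿ`, hence `E = B_m · (A_m E)` is a polynomial
of degree at most `n + m` divisible by `B_m`. -/

namespace PowerSeries

open scoped Polynomial

section Semiring

variable {R : Type*} [Semiring R]

lemma coeff_zero_one_add_C_mul_X_mul (c : R) (f : R⟦X⟧) :
    coeff 0 ((1 + C c * X) * f) = coeff 0 f := by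
  rw [add_mul, one_mul, mul_assoc, map_add, coeff_C_mul, coeff_zero_X_mul, mul_zero, add_zero]

lemma coeff_succ_one_add_C_mul_X_mul (c : R) (f : R⟦X⟧) (k : ℕ) :
    coeff (k + 1) ((1 + C c * X) * f) = coeff (k + 1) f + c * coeff k f := by
  rw [add_mul, one_mul, mul_assoc, map_add, coeff_C_mul, coeff_succ_X_mul]

end Semiring

section CommRing

variable {R : Type*} [CommRing R]

lemma coeff_mk_mul_mk_of_eq_one {a : ℕ → R} (ha : a 0 = 1) (e : ℕ → R) (p : ℕ) :
    coeff p (mk a * mk e) = e p + ∑ k ∈ Icc 1 p, a k * e (p - k) := by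
  rw [coeff_mul, Nat.sum_antidiagonal_eq_sum_range_succ_mk, sum_range_succ',
    ← Ico_add_one_right_eq_Icc, sum_Ico_eq_sum_range]
  simp only [coeff_mk, ha, one_mul, Nat.sub_zero, add_tsub_cancel_right, add_comm 1]
  ring

lemma eq_coe_trunc_mul_of_mul_eq_one {A φ : R⟦X⟧} {B : R[X]} (hAB : A * B = 1) {n : ℕ}
    (hφ : ∀ p, n < p → coeff p (A * φ) = 0) :
    φ = ((trunc (n + 1) (A * φ) * B : R[X]) : R⟦X⟧) := by
  have htrunc : (trunc (n + 1) (A * φ) : R⟦X⟧) = A * φ := by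
    ext p
    rw [Polynomial.coeff_coe, coeff_trunc]
    split_ifs with hp
    · rfl
    · exact (hφ p (by omega)).symm
  rw [Polynomial.coe_mul, htrunc, mul_right_comm, hAB, one_mul]

theorem eq_zero_and_dvd_of_mul_eq_one {A : R⟦X⟧} {B : R[X]} {m n : ℕ} (hB : B.natDegree ≤ m)
    (hAB : A * B = 1) {e : ℕ → R} (he : ∀ p, n < p → coeff p (A * mk e) = 0) :
    (∀ p, n + m < p → e p = 0) ∧
      B ∣ ∑ p ∈ range (m + n + 1), Polynomial.C (e p) * Polynomial.X ^ p := by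
  set Q := trunc (n + 1) (A * mk e)
  have hcoeff (p : ℕ) : e p = (Q * B).coeff p := by
    rw [← coeff_mk p e, eq_coe_trunc_mul_of_mul_eq_one hAB he, Polynomial.coeff_coe]
  have hQ : Q.natDegree < n + 1 := natDegree_trunc_lt _ n
  have hdeg : (Q * B).natDegree < m + n + 1 := Polynomial.natDegree_mul_le.trans_lt (by omega)
  have hvanish (p : ℕ) (hp : n + m < p) : e p = 0 := by
    rw [hcoeff]
    exact Polynomial.coeff_eq_zero_of_natDegree_lt (by omega)
  refine ⟨hvanish, Q, ?_⟩
  simp only [hcoeff, mul_comm B]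
  exact ((Q * B).as_sum_range_C_mul_X_pow' hdeg).symm

end CommRing

end PowerSeries

lemma qint_add {u : KK} (hu : u ≠ 0) (a b : ℤ) :
    qint u (a + b) = u ^ b * qint u a + u ^ (-a) * qint u b := by
  simp only [qint, mul_div_assoc', ← add_div, neg_add, zpow_add₀ hu]
  ring

lemma qint_ne_zero {u : KK} (hu : u ≠ 0) (hu1 : ∀ j : ℤ, j ≠ 0 → u ^ j ≠ 1) {n : ℤ}
    (hn : n ≠ 0) : qint u n ≠ 0 := by
  have hnum : ∀ j : ℤ, j ≠ 0 → u ^ j - u ^ (-j) ≠ 0 := by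
    intro j hj heq
    apply hu1 (j + j) (by omega)
    rw [zpow_add₀ hu]
    nth_rewrite 2 [sub_eq_zero.1 heq]
    rw [← zpow_add₀ hu, add_neg_cancel, zpow_zero]
  have hden : u - u⁻¹ ≠ 0 := by simpa using hnum 1 one_ne_zero
  exact div_ne_zero (hnum n hn) hden

lemma qint_wvar_zpow_ne_zero {d n : ℤ} (hd : d ≠ 0) (hn : n ≠ 0) : qint (wvar ^ d) n ≠ 0 := by
  refine qint_ne_zero (zpow_ne_zero _ RatFunc.X_ne_zero) (fun j hj h => ?_) hn
  classical
  have := congrArg (RatFunc.inftyValuation ℚ) h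
  rw [← zpow_mul, RatFunc.inftyValuation.X_zpow, map_one, WithZero.exp_eq_one] at this
  exact mul_ne_zero hd hj this

@[simp]
lemma qbinom_zero_right (u : KK) (n : ℤ) : qbinom u n 0 = 1 := by simp [qbinom]

lemma qbinom_natCast_eq_zero (u : KK) {j k : ℕ} (h : j < k) : qbinom u j k = 0 := by
  rw [qbinom, prod_eq_zero (mem_range.2 h) (by simp [qint]), zero_div]

lemma qbinom_one_eq_zero (n : ℤ) {k : ℕ} (hk : k ≠ 0) : qbinom 1 n k = 0 := by
  rw [qbinom, prod_eq_zero (mem_range.2 (Nat.pos_of_ne_zero hk)) (by simp [qint]), zero_div]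

lemma qbinom_succ_succ {u : KK} (hu : u ≠ 0) (hq : ∀ j : ℕ, qint u ((j : ℤ) + 1) ≠ 0)
    (n : ℤ) (k : ℕ) :
    qbinom u (n + 1) (k + 1) = u⁻¹ ^ (k + 1) * qbinom u n (k + 1) + u ^ (n - k) * qbinom u n k := by
  have hsplit := qint_add hu ((k : ℤ) + 1) (n - k)
  rw [show (k : ℤ) + 1 + (n - k) = n + 1 by ring] at hsplit
  have hD := hq k
  simp only [qbinom, prod_range_succ' (fun i : ℕ => qint u (n + 1 - i)), prod_range_succ]
  push_cast
  simp only [add_sub_add_right_eq_sub, sub_zero]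
  have hinv : u ^ (-((k : ℤ) + 1)) = u⁻¹ ^ (k + 1) := by
    rw [zpow_neg, inv_pow]
    norm_cast
  rw [hsplit, hinv]
  field_simp
  ring

def qbinomPoly (u : KK) (m : ℕ) : Polynomial KK :=
  ∑ k ∈ range (m + 1), Polynomial.C (qbinom u m k) * Polynomial.X ^ k

/-- The q-analogue of `(1 + t)⁻ᵐ = ∑ₖ (-1)ᵏ (m+k-1 choose k) tᵏ`, the inverse of `qbinomPoly u m`. -/
def negQBinomSeries (u : KK) (m : ℕ) : PowerSeries KK :=
  PowerSeries.mk fun k => (-1) ^ k * qbinom u ((m : ℤ) + k - 1) k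

lemma coeff_qbinomPoly (u : KK) (m k : ℕ) : (qbinomPoly u m).coeff k = qbinom u m k := by
  simp only [qbinomPoly, Polynomial.finsetSum_coeff, Polynomial.coeff_C_mul_X_pow, sum_ite_eq,
    mem_range]
  split_ifs with hk
  · rfl
  · exact (qbinom_natCast_eq_zero u (by omega)).symm

lemma natDegree_qbinomPoly_le (u : KK) (m : ℕ) : (qbinomPoly u m).natDegree ≤ m :=
  Polynomial.natDegree_sum_le_of_forall_le _ _ fun _ hk =>
    (Polynomial.natDegree_C_mul_X_pow_le _ _).trans (Nat.le_of_lt_succ (mem_range.1 hk))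

lemma qbinomPoly_one (m : ℕ) : qbinomPoly 1 m = 1 := by
  rw [qbinomPoly, sum_eq_single_of_mem 0 (by simp) fun _ _ hk => by
    rw [qbinom_one_eq_zero _ hk, map_zero, zero_mul]]
  simp

lemma negQBinomSeries_one (m : ℕ) : negQBinomSeries 1 m = 1 := by
  ext (_ | k)
  · simp [negQBinomSeries]
  · simp [negQBinomSeries, qbinom_one_eq_zero]

lemma negQBinomSeries_zero (u : KK) : negQBinomSeries u 0 = 1 := by
  ext (_ | k)
  · simp [negQBinomSeries]
  · rw [negQBinomSeries, PowerSeries.coeff_mk, PowerSeries.coeff_one, if_neg k.succ_ne_zero,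
      show ((0 : ℕ) : ℤ) + ((k + 1 : ℕ) : ℤ) - 1 = (k : ℕ) by push_cast; ring,
      qbinom_natCast_eq_zero u k.lt_succ_self, mul_zero]

open PowerSeries in
lemma coe_qbinomPoly_succ {u : KK} (hu : u ≠ 0) (hq : ∀ j : ℕ, qint u ((j : ℤ) + 1) ≠ 0)
    (m : ℕ) :
    (qbinomPoly u (m + 1) : KK⟦X⟧) = (1 + C (u ^ m) * X) * rescale u⁻¹ (qbinomPoly u m : KK⟦X⟧) := by
  ext (_ | k)
  · rw [coeff_zero_one_add_C_mul_X_mul, coeff_rescale]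
    simp [coeff_qbinomPoly]
  · rw [coeff_succ_one_add_C_mul_X_mul, coeff_rescale, coeff_rescale]
    simp only [Polynomial.coeff_coe, coeff_qbinomPoly, Nat.cast_succ, qbinom_succ_succ hu hq,
      zpow_sub₀ hu, zpow_natCast]
    ring

open PowerSeries in
lemma one_add_C_mul_X_mul_negQBinomSeries_succ {u : KK} (hu : u ≠ 0)
    (hq : ∀ j : ℕ, qint u ((j : ℤ) + 1) ≠ 0) (m : ℕ) :
    (1 + C (u ^ m) * X) * negQBinomSeries u (m + 1) = rescale u⁻¹ (negQBinomSeries u m) := by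
  ext (_ | k)
  · rw [coeff_zero_one_add_C_mul_X_mul, coeff_rescale]
    simp [negQBinomSeries]
  · rw [coeff_succ_one_add_C_mul_X_mul, coeff_rescale]
    simp only [negQBinomSeries, coeff_mk]
    have hcast : ((m + 1 : ℕ) : ℤ) + ((k + 1 : ℕ) : ℤ) - 1 = (m + k : ℤ) + 1 := by push_cast; ring
    rw [hcast, qbinom_succ_succ hu hq, show ((m + 1 : ℕ) : ℤ) + k - 1 = m + k by push_cast; ring,
      show ((m : ℕ) : ℤ) + ((k + 1 : ℕ) : ℤ) - 1 = m + k by push_cast; ring,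
      show (m : ℤ) + k - k = m by ring, zpow_natCast]
    ring

lemma negQBinomSeries_mul_qbinomPoly {u : KK} (hu : u ≠ 0)
    (hq : ∀ j : ℕ, qint u ((j : ℤ) + 1) ≠ 0) (m : ℕ) :
    negQBinomSeries u m * (qbinomPoly u m : PowerSeries KK) = 1 := by
  induction m with
  | zero => simp [negQBinomSeries_zero, qbinomPoly]
  | succ m ih =>
    rw [coe_qbinomPoly_succ hu hq, mul_left_comm, ← mul_assoc,
      one_add_C_mul_X_mul_negQBinomSeries_succ hu hq, ← map_mul, ih, map_one]

/-- Proposition gen_recursion: if `e_p = ∑_{k=1}^p (-1)^{k-1} e_{p-k} [m+k-1 choose k]_w`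
for all `p > n` (with `w = v^d`), then `e_p = 0` for `p > n+m` and
`∑_{k=0}^m [m choose k]_w t^k` divides `∑_{p=0}^{m+n} e_p t^p`. -/
theorem gen_recursion (m n : ℕ) (d : ℤ) (e : ℕ → KK)
    (hrec : ∀ p, n < p →
      e p = ∑ k ∈ Finset.Icc 1 p,
        (-1 : KK) ^ (k - 1) * e (p - k) * qbinom (wvar ^ d) ((m : ℤ) + (k : ℤ) - 1) k) :
    (∀ p, n + m < p → e p = 0) ∧
    (∑ k ∈ Finset.range (m + 1),
        Polynomial.C (qbinom (wvar ^ d) (m : ℤ) k) * Polynomial.X ^ k) ∣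
      (∑ p ∈ Finset.range (m + n + 1), Polynomial.C (e p) * Polynomial.X ^ p) := by
  have hAB : negQBinomSeries (wvar ^ d) m * (qbinomPoly (wvar ^ d) m : PowerSeries KK) = 1 := by
    rcases eq_or_ne d 0 with rfl | hd
    -- for `w = 1` every `qint 1 k` is the junk value `0 / 0 = 0`
    · simp [negQBinomSeries_one, qbinomPoly_one]
    · exact negQBinomSeries_mul_qbinomPoly (zpow_ne_zero _ RatFunc.X_ne_zero)
        (fun j => qint_wvar_zpow_ne_zero hd (by omega)) m
  refine PowerSeries.eq_zero_and_dvd_of_mul_eq_one (natDegree_qbinomPoly_le _ m) hAB fun p hp => ?_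
  rw [negQBinomSeries, PowerSeries.coeff_mk_mul_mk_of_eq_one (by simp), hrec p hp,
    ← sum_add_distrib]
  refine sum_eq_zero fun k hk => ?_
  obtain ⟨j, rfl⟩ := Nat.exists_eq_add_of_le' (mem_Icc.1 hk).1
  simp only [add_tsub_cancel_right, pow_succ]
  ring

end
end

section
/- Fix positive integers b, c and integers a_1 <= 0 < a_2. The coefficients e(p,q) defined by the quantum greedy recurrence satisfy e(p,0) = [a_2 choose p]_{v^b} for all p >= 0 and e(p,q) = 0 for all q > 0. -/
open Finset

noncomputable section

/-!
Since `c a₁ q ≤ 0 ≤ b a₂ p`, the first recurrence holds at every `(p, q) ≠ (0, 0)`. For `q > 0`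
it expresses `e(p, q)` through the `e(p - k, q)`, so these vanish by induction on `p`, starting
from the empty sum at `p = 0`. For `q = 0` it is a recurrence that `[a₂ choose p]` also satisfies:
for every integer `m` and `n > 0` the convolution `∑_{i+j=n} [m choose i] [-m choose j]` vanishes,
since it does at `m = 0` and, by the two quantum Pascal rules, shifting `m` by one multiplies it
by `u^n`; with `[-m choose k] = (-1)^k [m+k-1 choose k]` this is the recurrence.
-/

lemma RatFunc.X_pow_ne_one {K : Type*} [Field K] {n : ℕ} (hn : n ≠ 0) :
    (RatFunc.X : RatFunc K) ^ n ≠ 1 := by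
  intro h
  have := congrArg RatFunc.intDegree h
  rw [← RatFunc.algebraMap_X, ← map_pow, RatFunc.intDegree_polynomial,
    Polynomial.natDegree_X_pow, RatFunc.intDegree_one] at this
  exact hn (by exact_mod_cast this)

lemma qint_zero (u : KK) : qint u 0 = 0 := by simp [qint]

lemma qint_neg (u : KK) (n : ℤ) : qint u (-n) = -qint u n := by
  rw [qint, qint, neg_neg, ← neg_sub, neg_div]

lemma ne_zero_of_qint_ne_zero {u : KK} {n : ℤ} (h : qint u n ≠ 0) : u ≠ 0 := by
  rintro rfl
  simp [qint] at h

lemma qint_ne_zero_of_pow_ne_one {u : KK} (hu₀ : u ≠ 0) (hu : ∀ m : ℕ, m ≠ 0 → u ^ m ≠ 1)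
    (k : ℕ) : qint u (k + 1) ≠ 0 := by
  have key : ∀ n : ℕ, n ≠ 0 → u ^ (n : ℤ) - u ^ (-(n : ℤ)) ≠ 0 := by
    intro n hn h
    refine hu (n + n) (by omega) ?_
    rw [pow_add, ← zpow_natCast]
    nth_rw 1 [sub_eq_zero.mp h]
    rw [zpow_neg, inv_mul_cancel₀ (zpow_ne_zero _ hu₀)]
  refine div_ne_zero (by exact_mod_cast key (k + 1) k.succ_ne_zero) ?_
  simpa using key 1 one_ne_zero

lemma qint_wvar_pow_ne_zero {b : ℕ} (hb : 0 < b) (k : ℕ) : qint (wvar ^ b) (k + 1) ≠ 0 :=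
  qint_ne_zero_of_pow_ne_one (pow_ne_zero b RatFunc.X_ne_zero)
    (fun m hm ↦ by rw [← pow_mul]; exact RatFunc.X_pow_ne_one (by positivity)) k

lemma qint_split {u : KK} (hu : u ≠ 0) (n m : ℤ) :
    qint u n = u ^ m * qint u (n - m) + u ^ (m - n) * qint u m := by
  rw [qint, qint, qint, mul_div_assoc', mul_div_assoc', ← add_div]
  congr 1
  simp only [mul_sub, ← zpow_add₀ hu]
  ring_nf

lemma qbinom_succ (u : KK) (n : ℤ) (k : ℕ) :
    qbinom u n (k + 1) = qint u n / qint u (k + 1) * qbinom u (n - 1) k := by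
  rw [qbinom, qbinom, prod_range_succ', prod_range_succ, div_mul_div_comm, mul_comm (qint u n),
    mul_comm (qint u _)]
  simp only [Nat.cast_add, Nat.cast_one, Nat.cast_zero, sub_zero, sub_add_eq_sub_sub_swap]

lemma qbinom_succ' (u : KK) (n : ℤ) (k : ℕ) :
    qbinom u n (k + 1) = qbinom u n k * (qint u (n - k) / qint u (k + 1)) := by
  rw [qbinom, qbinom, prod_range_succ, prod_range_succ, div_mul_div_comm]

lemma qbinom_zero_left (u : KK) {k : ℕ} (hk : k ≠ 0) : qbinom u 0 k = 0 := by
  obtain ⟨k, rfl⟩ := Nat.exists_eq_succ_of_ne_zero hk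
  rw [qbinom_succ, qint_zero, zero_div, zero_mul]

lemma qbinom_neg (u : KK) (n : ℤ) (k : ℕ) :
    qbinom u (-n) k = (-1) ^ k * qbinom u (n + k - 1) k := by
  induction k with
  | zero => simp
  | succ k ih =>
    rw [qbinom_succ', ih, qbinom_succ, show -n - k = -(n + k) by ring, qint_neg]
    push_cast
    ring_nf

lemma qbinom_pascal {u : KK} {k : ℕ} (hk : qint u (k + 1) ≠ 0) (n : ℤ) :
    qbinom u n (k + 1) =
      u ^ ((k : ℤ) + 1 - n) * qbinom u (n - 1) k + u ^ ((k : ℤ) + 1) * qbinom u (n - 1) (k + 1) := by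
  rw [qbinom_succ, qbinom_succ' u (n - 1), qint_split (ne_zero_of_qint_ne_zero hk) n (k + 1)]
  field_simp
  ring_nf

lemma qbinom_pascal' {u : KK} {k : ℕ} (hk : qint u (k + 1) ≠ 0) (n : ℤ) :
    qbinom u n (k + 1) =
      u ^ (n - k - 1) * qbinom u (n - 1) k + u ^ (-((k : ℤ) + 1)) * qbinom u (n - 1) (k + 1) := by
  rw [qbinom_succ, qbinom_succ' u (n - 1), qint_split (ne_zero_of_qint_ne_zero hk) n (n - k - 1)]
  field_simp
  ring_nf

def qbinomConv (u : KK) (m : ℤ) (n : ℕ) : KK :=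
  ∑ x ∈ antidiagonal n, qbinom u m x.1 * qbinom u (-m) x.2

lemma qbinomConv_zero (u : KK) {n : ℕ} (hn : n ≠ 0) : qbinomConv u 0 n = 0 := by
  refine sum_eq_zero fun x hx ↦ ?_
  rw [HasAntidiagonal.mem_antidiagonal] at hx
  obtain h | h := eq_or_ne x.1 0
  · rw [neg_zero, qbinom_zero_left u (k := x.2) (by omega), mul_zero]
  · rw [qbinom_zero_left u h, zero_mul]

lemma qbinomConv_add_one {u : KK} (hu : ∀ k : ℕ, qint u (k + 1) ≠ 0) (m : ℤ) (n : ℕ) :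
    qbinomConv u (m + 1) (n + 1) = u ^ (n + 1) * qbinomConv u m (n + 1) := by
  set F : ℕ × ℕ → KK := fun x ↦ u ^ x.1 * qbinom u m x.1 * qbinom u (-m - 1) x.2
  set G : ℕ × ℕ → KK := fun x ↦ u ^ ((x.1 : ℤ) - m) * qbinom u m x.1 * qbinom u (-m - 1) x.2
  have hu₀ : u ≠ 0 := ne_zero_of_qint_ne_zero (hu 0)
  calc qbinomConv u (m + 1) (n + 1)
      = F (0, n + 1) + ∑ x ∈ antidiagonal n, (G x + F (x.1 + 1, x.2)) := by
        rw [qbinomConv, Nat.sum_antidiagonal_succ]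
        congr 1
        · simp [F, sub_eq_add_neg, add_comm]
        · refine sum_congr rfl fun x _ ↦ ?_
          rw [qbinom_pascal (hu x.1), add_sub_cancel_right]
          simp only [F, G, neg_add', ← zpow_natCast]
          push_cast
          ring_nf
    _ = ∑ x ∈ antidiagonal n, G x + ∑ x ∈ antidiagonal (n + 1), F x := by
        rw [Nat.sum_antidiagonal_succ, sum_add_distrib]
        ring
    _ = F (n + 1, 0) + ∑ x ∈ antidiagonal n, (G x + F (x.1, x.2 + 1)) := by
        rw [Nat.sum_antidiagonal_succ', sum_add_distrib]
        ring
    _ = u ^ (n + 1) * qbinomConv u m (n + 1) := by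
        rw [qbinomConv, Nat.sum_antidiagonal_succ', mul_add, mul_sum]
        congr 1
        · simp [F, mul_comm]
        · refine sum_congr rfl fun x hx ↦ ?_
          rw [HasAntidiagonal.mem_antidiagonal] at hx
          have e₁ : u ^ (n + 1) * u ^ (-m - x.2 - 1) = u ^ ((x.1 : ℤ) - m) := by
            rw [← zpow_natCast, ← zpow_add₀ hu₀, ← hx]
            push_cast
            ring_nf
          have e₂ : u ^ (n + 1) * u ^ (-((x.2 : ℤ) + 1)) = u ^ x.1 := by
            rw [← zpow_natCast, ← zpow_natCast, ← zpow_add₀ hu₀, ← hx]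
            push_cast
            ring_nf
          rw [qbinom_pascal' (hu x.2)]
          linear_combination -qbinom u m x.1 * qbinom u (-m - 1) x.2 * e₁ -
            qbinom u m x.1 * qbinom u (-m - 1) (x.2 + 1) * e₂

lemma qbinomConv_eq_zero {u : KK} (hu : ∀ k : ℕ, qint u (k + 1) ≠ 0) (m : ℤ) {n : ℕ}
    (hn : n ≠ 0) : qbinomConv u m n = 0 := by
  obtain ⟨n, rfl⟩ := Nat.exists_eq_succ_of_ne_zero hn
  induction m using Int.induction_on with
  | zero => exact qbinomConv_zero u hn
  | succ m ih => rw [qbinomConv_add_one hu, ih, mul_zero]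
  | pred m ih =>
    have h := qbinomConv_add_one hu (-m - 1) n
    rw [sub_add_cancel, ih, eq_comm, mul_eq_zero] at h
    exact h.resolve_left (pow_ne_zero _ (ne_zero_of_qint_ne_zero (hu 0)))

lemma qbinom_eq_sum_Icc {u : KK} (hu : ∀ k : ℕ, qint u (k + 1) ≠ 0) (a : ℤ) {p : ℕ}
    (hp : p ≠ 0) :
    qbinom u a p =
      ∑ k ∈ Icc 1 p, (-1 : KK) ^ (k - 1) * qbinom u a (p - k) * qbinom u (a + k - 1) k := by
  have h := qbinomConv_eq_zero hu a hp
  rw [qbinomConv, ← Nat.sum_antidiagonal_swap] at h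
  simp only [Prod.fst_swap, Prod.snd_swap] at h
  rw [    Nat.sum_antidiagonal_eq_sum_range_succ (fun k j ↦ qbinom u a j * qbinom u (-a) k),
    sum_range_eq_add_Ico _ p.succ_pos, Nat.sub_zero, qbinom_zero_right, mul_one,
    Nat.succ_eq_add_one, Ico_add_one_right_eq_Icc] at h
  have hterm : ∀ k ∈ Icc 1 p, qbinom u a (p - k) * qbinom u (-a) k =
      -((-1 : KK) ^ (k - 1) * qbinom u a (p - k) * qbinom u (a + k - 1) k) := by
    intro k hk
    obtain ⟨k, rfl⟩ := Nat.exists_eq_add_one_of_ne_zero (Nat.one_le_iff_ne_zero.mp (mem_Icc.mp hk).1)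
    rw [qbinom_neg, pow_succ, Nat.add_sub_cancel]
    ring
  rw [sum_congr rfl hterm, sum_neg_distrib] at h
  linear_combination h

theorem greedy_case2_general (b c : ℕ) (hb : 0 < b) (a1 a2 : ℤ)
    (ha1 : a1 ≤ 0) (ha2 : 0 < a2)
    (e : ℕ → ℕ → KK) (h00 : e 0 0 = 1)
    (hrec1 : ∀ p q : ℕ, (p, q) ≠ (0, 0) → (c : ℤ) * a1 * q ≤ (b : ℤ) * a2 * p →
      e p q = ∑ k ∈ Finset.Icc 1 p, (-1 : KK) ^ (k - 1) * e (p - k) q *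
        qbinom (wvar ^ b) (max (a2 - c * q) 0 + (k : ℤ) - 1) k) :
    (∀ p : ℕ, e p 0 = qbinom (wvar ^ b) a2 p) ∧
    (∀ p q : ℕ, 0 < q → e p q = 0) := by
  have hcond (p q : ℕ) : (c : ℤ) * a1 * q ≤ (b : ℤ) * a2 * p :=
    (mul_nonpos_of_nonpos_of_nonneg (mul_nonpos_of_nonneg_of_nonpos c.cast_nonneg ha1)
      q.cast_nonneg).trans (by positivity)
  constructor
  · intro p
    induction p using Nat.strong_induction_on with
    | _ p ih =>
      obtain rfl | hp := eq_or_ne p 0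
      · rw [h00, qbinom_zero_right]
      rw [hrec1 p 0 (by simp [hp]) (hcond p 0), qbinom_eq_sum_Icc (qint_wvar_pow_ne_zero hb) a2 hp]
      refine sum_congr rfl fun k hk ↦ ?_
      rw [ih (p - k) (by grind), Nat.cast_zero, mul_zero, sub_zero, max_eq_left ha2.le]
  · intro p
    induction p using Nat.strong_induction_on with
    | _ p ih =>
      intro q hq
      rw [hrec1 p q (by simp [hq.ne']) (hcond p q)]
      refine sum_eq_zero fun k hk ↦ ?_
      rw [ih (p - k) (by grind) q hq, mul_zero, zero_mul]

/-- If `a_1 ≤ 0 < a_2`, the quantum greedy coefficients satisfy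
`e(p,0) = [a_2 choose p]_{v^b}` and `e(p,q) = 0` for `q > 0`. -/
theorem greedy_case2 (b c : ℕ) (hb : 0 < b) (hc : 0 < c) (a1 a2 : ℤ)
    (ha1 : a1 ≤ 0) (ha2 : 0 < a2)
    (e : ℕ → ℕ → KK) (h00 : e 0 0 = 1)
    (hrec1 : ∀ p q : ℕ, (p, q) ≠ (0, 0) → (c : ℤ) * a1 * q ≤ (b : ℤ) * a2 * p →
      e p q = ∑ k ∈ Finset.Icc 1 p, (-1 : KK) ^ (k - 1) * e (p - k) q *
        qbinom (wvar ^ b) (max (a2 - c * q) 0 + (k : ℤ) - 1) k)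
    (hrec2 : ∀ p q : ℕ, (p, q) ≠ (0, 0) → (b : ℤ) * a2 * p ≤ (c : ℤ) * a1 * q →
      e p q = ∑ l ∈ Finset.Icc 1 q, (-1 : KK) ^ (l - 1) * e p (q - l) *
        qbinom (wvar ^ c) (max (a1 - b * p) 0 + (l : ℤ) - 1) l) :
    (∀ p : ℕ, e p 0 = qbinom (wvar ^ b) a2 p) ∧
    (∀ p q : ℕ, 0 < q → e p q = 0) :=
  greedy_case2_general b c hb a1 a2 ha1 ha2 e h00 hrec1

end
end

section
/- Fix positive integers b, c. In the quantum torus T over Z[v^{±1}] generated by X_1^{±1}, X_2^{±1} with X_2 X_1 = v^2 X_1 X_2, define cluster variables X_m recursively by X_{m+1} X_{m-1} = v^b X_m^b + 1 for m odd and X_{m+1} X_{m-1} = v^c X_m^c + 1 for m even. Then for all m, the neighboring cluster variables quasi-commute: X_{m+1} X_m = v^2 X_m X_{m+1}. -/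
open Finset

noncomputable section

/-!
Each exchange relation writes `X_{m+1} X_{m-1}` as a polynomial in `X_m` with central
coefficients, which commutes with `X_m`. Hence quasi-commutation of one neighbouring pair passes to
the next pair on either side, and induction in both directions from `X_1, X_2` covers all `m`.
-/

def QuasiCommute {K A : Type*} [CommSemiring K] [Semiring A] [Algebra K A]
    (t : K) (x y : A) : Prop :=
  y * x = algebraMap K A t * (x * y)

section QuasiCommute

variable {K A : Type*} [CommSemiring K] [Semiring A] [Algebra K A] {t : K} {x y z : A}

/-- Morally `z = (z x) x⁻¹`, where `z x` commutes with `y` and `x⁻¹ y = t y x⁻¹`. -/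
theorem QuasiCommute.exchange_right [IsRightCancelMulZero A] (hxy : QuasiCommute t x y)
    (hx : x ≠ 0) (hzx : Commute (z * x) y) : QuasiCommute t y z := by
  apply mul_right_cancel₀ hx
  calc z * y * x = z * (algebraMap K A t * (x * y)) := by rw [mul_assoc, hxy]
    _ = algebraMap K A t * (z * x * y) := by
        rw [← (Algebra.commute_algebraMap_left t z).left_comm, ← mul_assoc z]
    _ = algebraMap K A t * (y * z) * x := by rw [hzx.eq, mul_assoc, mul_assoc]

theorem QuasiCommute.exchange_left [IsLeftCancelMulZero A] (hxy : QuasiCommute t x y)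
    (hy : y ≠ 0) (hyz : Commute (y * z) x) : QuasiCommute t z x := by
  apply mul_left_cancel₀ hy
  calc y * (x * z) = algebraMap K A t * (x * (y * z)) := by
        rw [← mul_assoc, hxy, mul_assoc, mul_assoc]
    _ = y * (algebraMap K A t * (z * x)) := by
        rw [← hyz.eq, mul_assoc, (Algebra.commute_algebraMap_left t y).left_comm]

end QuasiCommute

theorem commute_algebraMap_mul_pow_add_one {K A : Type*} [CommSemiring K] [Semiring A]
    [Algebra K A] (s : K) (a : A) (k : ℕ) : Commute (algebraMap K A s * a ^ k + 1) a :=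
  ((Algebra.commute_algebraMap_left s a).mul_left (Commute.pow_self a k)).add_left
    (Commute.one_left a)

theorem cluster_variables_quasi_commute_general (b c : ℕ)
    (F : Type*) [DivisionRing F] [Algebra KK F]
    (Xc : ℤ → F) (hne : ∀ m : ℤ, Xc m ≠ 0)
    (hbase : Xc 2 * Xc 1 = algebraMap KK F (wvar ^ 2) * (Xc 1 * Xc 2))
    (hex : ∀ m : ℤ, Xc (m + 1) * Xc (m - 1) =
      if Odd m then algebraMap KK F (wvar ^ b) * Xc m ^ b + 1
      else algebraMap KK F (wvar ^ c) * Xc m ^ c + 1) :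
    ∀ m : ℤ, Xc (m + 1) * Xc m = algebraMap KK F (wvar ^ 2) * (Xc m * Xc (m + 1)) := by
  have hcomm : ∀ m : ℤ, Commute (Xc (m + 1) * Xc (m - 1)) (Xc m) := fun m => by
    rw [hex m]
    split_ifs <;> exact commute_algebraMap_mul_pow_add_one _ _ _
  intro m
  change QuasiCommute (wvar ^ 2) (Xc m) (Xc (m + 1))
  induction m using Int.inductionOn' (b := 1) with
  | zero => exact hbase
  | succ k _ ih =>
    have hnext := hcomm (k + 1)
    rw [add_sub_cancel_right] at hnext
    exact ih.exchange_right (hne k) hnext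
  | pred k _ ih =>
    rw [sub_add_cancel]
    exact ih.exchange_left (hne (k + 1)) (hcomm k)

/-- Neighboring quantum cluster variables quasi-commute: `X_{m+1} X_m = v² X_m X_{m+1}`. -/
theorem cluster_variables_quasi_commute (b c : ℕ) (hb : 0 < b) (hc : 0 < c)
    (F : Type*) [DivisionRing F] [Algebra KK F]
    (Xc : ℤ → F) (hne : ∀ m : ℤ, Xc m ≠ 0)
    (hbase : Xc 2 * Xc 1 = algebraMap KK F (wvar ^ 2) * (Xc 1 * Xc 2))
    (hex : ∀ m : ℤ, Xc (m + 1) * Xc (m - 1) =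
      if Odd m then algebraMap KK F (wvar ^ b) * Xc m ^ b + 1
      else algebraMap KK F (wvar ^ c) * Xc m ^ c + 1) :
    ∀ m : ℤ, Xc (m + 1) * Xc m = algebraMap KK F (wvar ^ 2) * (Xc m * Xc (m + 1)) :=
  cluster_variables_quasi_commute_general b c F Xc hne hbase hex
end
end
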